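/- Let n ≥ 4 and, for r ∈ {2,…,n}, define on ℝ^{2n} with canonical coordinates (q¹,…,qⁿ,p₁,…,pₙ) the functions F_r(q,p) = ½ Σ_{i=n−r+2}^{n} Σ_{j=2n+2−i−r}^{n} q^{i+j+r−2n−2} p_i p_j + δ^{r+2}_n − δ^{r+1}_n q¹ − δ^{r}_n ( q² − (q¹)² ), with the convention q⁰ ≡ 1 (in particular F₂ = ½ pₙ²). Then, with respect to the canonical Poisson bracket: {pₙ, F_r} = 0 for all r = 2,…,n, and {F_r, F_s} = 0 for all r, s = 2,…,n; i.e., the additional integrals F_r of the n-dimensional cubic-potential Benenti Hamiltonian pairwise Poisson-commute and commute with pₙ. -/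

import Mathlib

open Finset

noncomputable section

/-- Component of `v : Fin n → ℝ` with label `t ∈ {1,…,n}` (and `0` otherwise). -/
def get (n : ℕ) (v : Fin n → ℝ) (t : ℕ) : ℝ :=
  if h : 1 ≤ t ∧ t ≤ n then v ⟨t - 1, by omega⟩ else 0

/-- Canonical Poisson bracket on `ℝ^{2n} = (Fin n → ℝ) × (Fin n → ℝ)`
(coordinates `(q, p)`). -/
def pbr (n : ℕ) (f g : (Fin n → ℝ) × (Fin n → ℝ) → ℝ)
    (x : (Fin n → ℝ) × (Fin n → ℝ)) : ℝ :=
  ∑ j : Fin n,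
    (fderiv ℝ f x (Pi.single j 1, 0) * fderiv ℝ g x (0, Pi.single j 1) -
      fderiv ℝ g x (Pi.single j 1, 0) * fderiv ℝ f x (0, Pi.single j 1))

/-- `q` extended to all labels with the convention `q⁰ ≡ 1`. -/
def qq (n : ℕ) (q : Fin n → ℝ) (t : ℕ) : ℝ := if t = 0 then 1 else get n q t

/-- The additional integrals of the `n`-dimensional cubic-potential Benenti system:
`F_r = ½ Σ_{i=n−r+2}^{n} Σ_{j=2n+2−i−r}^{n} q^{i+j+r−2n−2} p_i p_j + δ^{r+2}_n −
δ^{r+1}_n q¹ − δ^r_n (q² − (q¹)²)`. -/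
def Fcub (n r : ℕ) (x : (Fin n → ℝ) × (Fin n → ℝ)) : ℝ :=
  (1/2) * ∑ i ∈ Finset.Icc (n - r + 2) n, ∑ j ∈ Finset.Icc (2 * n + 2 - i - r) n,
      qq n x.1 (i + j + r - 2 * n - 2) * get n x.2 i * get n x.2 j +
    (if r + 2 = n then 1 else 0) - (if r + 1 = n then 1 else 0) * get n x.1 1 -
    (if r = n then 1 else 0) * (get n x.1 2 - get n x.1 1 ^ 2)


namespace BenAux

lemma get_zero (n t : ℕ) : get n (0 : Fin n → ℝ) t = 0 := by
  unfold _root_.get; split <;> simp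

lemma get_single (n : ℕ) (m : Fin n) (t : ℕ) :
    get n (Pi.single m (1:ℝ)) t = if t = m.1 + 1 then 1 else 0 := by
  have hm := m.isLt
  unfold _root_.get
  split
  · rename_i h
    rw [Pi.single_apply]
    by_cases ht : t = m.1 + 1
    · rw [if_pos ht, if_pos (Fin.ext (by simp; omega))]
    · rw [if_neg ht, if_neg (fun hc => ht (by rw [Fin.ext_iff] at hc; simp at hc; omega))]
  · rename_i h
    rw [if_neg (fun ht => h ⟨by omega, by omega⟩)]

/-- coordinate continuous linear maps -/
def Pg (n i : ℕ) : ((Fin n → ℝ) × (Fin n → ℝ)) →L[ℝ] ℝ :=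
  if h : 1 ≤ i ∧ i ≤ n then
    (ContinuousLinearMap.proj (⟨i - 1, by omega⟩ : Fin n)).comp
      (ContinuousLinearMap.snd ℝ (Fin n → ℝ) (Fin n → ℝ))
  else 0

def Qg (n i : ℕ) : ((Fin n → ℝ) × (Fin n → ℝ)) →L[ℝ] ℝ :=
  if h : 1 ≤ i ∧ i ≤ n then
    (ContinuousLinearMap.proj (⟨i - 1, by omega⟩ : Fin n)).comp
      (ContinuousLinearMap.fst ℝ (Fin n → ℝ) (Fin n → ℝ))
  else 0

lemma Pg_apply (n i : ℕ) (y : (Fin n → ℝ) × (Fin n → ℝ)) : Pg n i y = get n y.2 i := by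
  by_cases h : 1 ≤ i ∧ i ≤ n <;> simp [Pg, _root_.get, h]

lemma Qg_apply (n i : ℕ) (y : (Fin n → ℝ) × (Fin n → ℝ)) : Qg n i y = get n y.1 i := by
  by_cases h : 1 ≤ i ∧ i ≤ n <;> simp [Qg, _root_.get, h]

lemma hP (n i : ℕ) (x : (Fin n → ℝ) × (Fin n → ℝ)) :
    HasFDerivAt (fun y : (Fin n → ℝ) × (Fin n → ℝ) => get n y.2 i) (Pg n i) x := by
  have h : (⇑(Pg n i) : _ → ℝ) = fun y : (Fin n → ℝ) × (Fin n → ℝ) => get n y.2 i :=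
    funext fun y => Pg_apply n i y
  exact h ▸ (Pg n i).hasFDerivAt

lemma hQ (n i : ℕ) (x : (Fin n → ℝ) × (Fin n → ℝ)) :
    HasFDerivAt (fun y : (Fin n → ℝ) × (Fin n → ℝ) => get n y.1 i) (Qg n i) x := by
  have h : (⇑(Qg n i) : _ → ℝ) = fun y : (Fin n → ℝ) × (Fin n → ℝ) => get n y.1 i :=
    funext fun y => Qg_apply n i y
  exact h ▸ (Qg n i).hasFDerivAt

lemma hqq (n c : ℕ) (x : (Fin n → ℝ) × (Fin n → ℝ)) :
    HasFDerivAt (fun y : (Fin n → ℝ) × (Fin n → ℝ) => qq n y.1 c) (Qg n c) x := by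
  unfold qq
  by_cases hc : c = 0
  · simp only [if_pos hc]
    have : Qg n c = 0 := by subst hc; simp [Qg]
    rw [this]
    exact hasFDerivAt_const 1 x
  · simp only [if_neg hc]
    exact hQ n c x

lemma fderiv_Fcub (n r : ℕ) (x w : (Fin n → ℝ) × (Fin n → ℝ)) :
    fderiv ℝ (Fcub n r) x w =
      (1/2) * ∑ i ∈ Finset.Icc (n - r + 2) n, ∑ j ∈ Finset.Icc (2 * n + 2 - i - r) n,
          (get n w.1 (i + j + r - 2 * n - 2) * get n x.2 i * get n x.2 j
            + qq n x.1 (i + j + r - 2 * n - 2) *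
                (get n w.2 i * get n x.2 j + get n x.2 i * get n w.2 j))
        - (if r + 1 = n then 1 else 0) * get n w.1 1
        - (if r = n then 1 else 0) *
            (get n w.1 2 - 2 * get n x.1 1 * get n w.1 1) := by
  have hterm : ∀ i j : ℕ, HasFDerivAt
      (fun y : (Fin n → ℝ) × (Fin n → ℝ) =>
        qq n y.1 (i + j + r - 2 * n - 2) * get n y.2 i * get n y.2 j)
      ((qq n x.1 (i + j + r - 2 * n - 2) * get n x.2 i) • Pg n j
        + get n x.2 j • (qq n x.1 (i + j + r - 2 * n - 2) • Pg n i
            + get n x.2 i • Qg n (i + j + r - 2 * n - 2))) x :=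
    fun i j => ((hqq n _ x).mul (hP n i x)).mul (hP n j x)
  have hsum : HasFDerivAt
      (fun y : (Fin n → ℝ) × (Fin n → ℝ) =>
        ∑ i ∈ Finset.Icc (n - r + 2) n, ∑ j ∈ Finset.Icc (2 * n + 2 - i - r) n,
          qq n y.1 (i + j + r - 2 * n - 2) * get n y.2 i * get n y.2 j)
      (∑ i ∈ Finset.Icc (n - r + 2) n, ∑ j ∈ Finset.Icc (2 * n + 2 - i - r) n,
        ((qq n x.1 (i + j + r - 2 * n - 2) * get n x.2 i) • Pg n j
          + get n x.2 j • (qq n x.1 (i + j + r - 2 * n - 2) • Pg n i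
              + get n x.2 i • Qg n (i + j + r - 2 * n - 2)))) x :=
    HasFDerivAt.fun_sum fun i _ => HasFDerivAt.fun_sum fun j _ => hterm i j
  have hsq : HasFDerivAt (fun y : (Fin n → ℝ) × (Fin n → ℝ) => get n y.1 1 ^ 2)
      (get n x.1 1 • Qg n 1 + get n x.1 1 • Qg n 1) x := by
    have h := (hQ n 1 x).fun_mul (hQ n 1 x)
    rwa [show (fun y : (Fin n → ℝ) × (Fin n → ℝ) => get n y.1 1 * get n y.1 1)
        = fun y : (Fin n → ℝ) × (Fin n → ℝ) => get n y.1 1 ^ 2 from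
      funext fun y => (pow_two _).symm] at h
  have htot := (((hsum.const_mul (1/2 : ℝ)).add_const
      (if r + 2 = n then (1:ℝ) else 0)).sub
      ((hQ n 1 x).const_mul (if r + 1 = n then (1:ℝ) else 0))).sub
      (((hQ n 2 x).sub hsq).const_mul (if r = n then (1:ℝ) else 0))
  have hF : HasFDerivAt (Fcub n r) _ x := htot
  rw [hF.fderiv]
  simp only [ContinuousLinearMap.coe_sub', ContinuousLinearMap.coe_smul',
    Pi.sub_apply, Pi.smul_apply, ContinuousLinearMap.add_apply,
    ContinuousLinearMap.smul_apply, ContinuousLinearMap.sum_apply,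
    ContinuousLinearMap.coe_sum', Finset.sum_apply,
    smul_eq_mul, Pg_apply, Qg_apply, pow_one]
  have hss : ∀ i ∈ Finset.Icc (n - r + 2) n, ∀ j ∈ Finset.Icc (2 * n + 2 - i - r) n,
      (qq n x.1 (i + j + r - 2 * n - 2) * get n x.2 i) * get n w.2 j
        + get n x.2 j * (qq n x.1 (i + j + r - 2 * n - 2) * get n w.2 i
            + get n x.2 i * get n w.1 (i + j + r - 2 * n - 2))
      = get n w.1 (i + j + r - 2 * n - 2) * get n x.2 i * get n x.2 j
          + qq n x.1 (i + j + r - 2 * n - 2) *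
              (get n w.2 i * get n x.2 j + get n x.2 i * get n w.2 j) :=
    fun i _ j _ => by ring
  rw [Finset.sum_congr rfl fun i hi => Finset.sum_congr rfl fun j hj => hss i hi j hj]
  ring

def Tl (n s : ℕ) (x : (Fin n → ℝ) × (Fin n → ℝ)) (t : ℕ) : ℝ :=
  ∑ l ∈ Finset.Icc 1 n, (if 2*n+2 ≤ t+l+s then qq n x.1 (t+l+s-(2*n+2)) * get n x.2 l else 0)

def quadB (n u : ℕ) (x : (Fin n → ℝ) × (Fin n → ℝ)) (t : ℕ) : ℝ :=
  ∑ i ∈ Finset.Icc 1 n, ∑ j ∈ Finset.Icc 1 n,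
    (if i+j+u = 2*n+2+t then get n x.2 i * get n x.2 j else 0)

def W3 (n k : ℕ) (x : (Fin n → ℝ) × (Fin n → ℝ)) : ℝ :=
  ∑ i ∈ Finset.Icc 1 n, ∑ j ∈ Finset.Icc 1 n, ∑ l ∈ Finset.Icc 1 n,
    (if 4*n+4 ≤ i+j+l+k then
      get n x.2 i * get n x.2 j * get n x.2 l * qq n x.1 (i+j+l+k-(4*n+4)) else 0)

/-- extend the `Fcub` summation region to the full box `[1,n]²`. -/
lemma region (n u : ℕ) (hu2 : 2 ≤ u) (hun : u ≤ n) (f : ℕ → ℕ → ℝ) :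
    ∑ i ∈ Finset.Icc (n - u + 2) n, ∑ j ∈ Finset.Icc (2*n+2-i-u) n, f i j
    = ∑ i ∈ Finset.Icc 1 n, ∑ j ∈ Finset.Icc 1 n,
        (if 2*n+2 ≤ i+j+u then f i j else 0) := by
  rw [← Finset.sum_subset (Finset.Icc_subset_Icc (by omega) le_rfl :
      Finset.Icc (n - u + 2) n ⊆ Finset.Icc 1 n)]
  · apply Finset.sum_congr rfl
    intro i hi
    rw [Finset.mem_Icc] at hi
    rw [← Finset.sum_subset (Finset.Icc_subset_Icc (by omega) le_rfl :
        Finset.Icc (2*n+2-i-u) n ⊆ Finset.Icc 1 n)]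
    · apply Finset.sum_congr rfl
      intro j hj
      rw [Finset.mem_Icc] at hj
      rw [if_pos (by omega)]
    · intro j hj hj'
      rw [Finset.mem_Icc] at hj
      rw [Finset.mem_Icc] at hj'
      rw [if_neg (by omega)]
  · intro i hi hi'
    rw [Finset.mem_Icc] at hi
    rw [Finset.mem_Icc] at hi'
    apply Finset.sum_eq_zero
    intro j hj
    rw [Finset.mem_Icc] at hj
    rw [if_neg (by omega)]

lemma Tl_one (n s : ℕ) (hsn : s ≤ n) (x) : Tl n s x 1 = 0 := by
  apply Finset.sum_eq_zero
  intro l hl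
  rw [Finset.mem_Icc] at hl
  rw [if_neg (by omega)]

lemma Tl_two (n s : ℕ) (hs : s < n) (x) : Tl n s x 2 = 0 := by
  apply Finset.sum_eq_zero
  intro l hl
  rw [Finset.mem_Icc] at hl
  rw [if_neg (by omega)]

lemma sum_delta (n k : ℕ) (hk1 : 1 ≤ k) (hk : k ≤ n) (g : ℕ → ℝ) :
    ∑ m : Fin n, (if k = m.1+1 then 1 else 0) * g (m.1+1) = g k := by
  rw [Finset.sum_eq_single (⟨k-1, by omega⟩ : Fin n)]
  · rw [if_pos (show k = (⟨k-1, by omega⟩ : Fin n).1 + 1 from by show k = k-1+1; omega),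
      one_mul, show (⟨k-1, by omega⟩ : Fin n).1 + 1 = k from by show k-1+1 = k; omega]
  · intro b _ hb
    rw [if_neg (fun hc => hb (Fin.ext (show b.1 = k-1 by omega))), zero_mul]
  · intro h; exact absurd (Finset.mem_univ _) h

/-- the `p`-gradient double sum collapses to `2 · Tl`. -/
lemma ApT (n u : ℕ) (x) (t : ℕ) (ht1 : 1 ≤ t) (htn : t ≤ n) :
    ∑ i ∈ Finset.Icc 1 n, ∑ j ∈ Finset.Icc 1 n,
      (if 2*n+2 ≤ i+j+u then
        qq n x.1 (i+j+u-(2*n+2)) * ((if i = t then 1 else 0) * get n x.2 j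
          + get n x.2 i * (if j = t then 1 else 0)) else 0)
    = 2 * Tl n u x t := by
  have split : ∀ i j : ℕ,
      (if 2*n+2 ≤ i+j+u then
        qq n x.1 (i+j+u-(2*n+2)) * ((if i = t then 1 else 0) * get n x.2 j
          + get n x.2 i * (if j = t then 1 else 0)) else 0)
      = (if i = t then (if 2*n+2 ≤ i+j+u then qq n x.1 (i+j+u-(2*n+2)) * get n x.2 j else 0) else 0)
        + (if j = t then (if 2*n+2 ≤ i+j+u then qq n x.1 (i+j+u-(2*n+2)) * get n x.2 i else 0) else 0) := by
    intro i j; split_ifs <;> ring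
  rw [Finset.sum_congr rfl fun i _ => Finset.sum_congr rfl fun j _ => split i j]
  rw [Finset.sum_congr rfl fun i (_ : i ∈ Finset.Icc 1 n) => Finset.sum_add_distrib]
  rw [Finset.sum_add_distrib]
  have h1 : ∑ i ∈ Finset.Icc 1 n, ∑ j ∈ Finset.Icc 1 n,
      (if i = t then (if 2*n+2 ≤ i+j+u then qq n x.1 (i+j+u-(2*n+2)) * get n x.2 j else 0) else 0)
      = Tl n u x t := by
    rw [Finset.sum_congr rfl fun i (_ : i ∈ Finset.Icc 1 n) =>
      (by by_cases h : i = t <;> simp [h] :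
        ∑ j ∈ Finset.Icc 1 n, (if i = t then (if 2*n+2 ≤ i+j+u then qq n x.1 (i+j+u-(2*n+2)) * get n x.2 j else 0) else 0)
        = if i = t then ∑ j ∈ Finset.Icc 1 n, (if 2*n+2 ≤ i+j+u then qq n x.1 (i+j+u-(2*n+2)) * get n x.2 j else 0) else 0)]
    rw [Finset.sum_ite_eq' (Finset.Icc 1 n) t]
    rw [if_pos (Finset.mem_Icc.mpr ⟨ht1, htn⟩)]
    rfl
  have h2 : ∑ i ∈ Finset.Icc 1 n, ∑ j ∈ Finset.Icc 1 n,
      (if j = t then (if 2*n+2 ≤ i+j+u then qq n x.1 (i+j+u-(2*n+2)) * get n x.2 i else 0) else 0)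
      = Tl n u x t := by
    rw [Finset.sum_comm]
    rw [Finset.sum_congr rfl fun j (_ : j ∈ Finset.Icc 1 n) =>
      (by by_cases h : j = t <;> simp [h] :
        ∑ i ∈ Finset.Icc 1 n, (if j = t then (if 2*n+2 ≤ i+j+u then qq n x.1 (i+j+u-(2*n+2)) * get n x.2 i else 0) else 0)
        = if j = t then ∑ i ∈ Finset.Icc 1 n, (if 2*n+2 ≤ i+j+u then qq n x.1 (i+j+u-(2*n+2)) * get n x.2 i else 0) else 0)]
    rw [Finset.sum_ite_eq' (Finset.Icc 1 n) t]
    rw [if_pos (Finset.mem_Icc.mpr ⟨ht1, htn⟩)]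
    unfold Tl
    apply Finset.sum_congr rfl
    intro l _
    rw [show l+t+u = t+l+u from by omega]
  rw [h1, h2]; ring

lemma sum_quad (n r s : ℕ) (hrn : r ≤ n) (hsn : s ≤ n) (x) :
    ∑ m : Fin n, ((1/2) * quadB n r x (m.1+1)) * Tl n s x (m.1+1)
    = (1/2) * W3 n (r+s) x := by
  have h1 : ∀ m : Fin n, ((1/2) * quadB n r x (m.1+1)) * Tl n s x (m.1+1)
      = (1/2) * ∑ i ∈ Finset.Icc 1 n, ∑ j ∈ Finset.Icc 1 n,
          (if i+j+r = 2*n+2+(m.1+1) then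
            get n x.2 i * get n x.2 j * Tl n s x (m.1+1) else 0) := by
    intro m
    rw [mul_assoc]
    congr 1
    unfold quadB
    rw [Finset.sum_mul]
    apply Finset.sum_congr rfl
    intro i _
    rw [Finset.sum_mul]
    apply Finset.sum_congr rfl
    intro j _
    rw [ite_mul, zero_mul]
  rw [Finset.sum_congr rfl fun m _ => h1 m, ← Finset.mul_sum]
  congr 1
  rw [Finset.sum_comm]
  apply Finset.sum_congr rfl
  intro i hi
  rw [Finset.sum_comm]
  apply Finset.sum_congr rfl
  intro j hj
  rw [Finset.mem_Icc] at hi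
  rw [Finset.mem_Icc] at hj
  by_cases hc : 2*n+3 ≤ i+j+r
  · rw [Finset.sum_eq_single (⟨i+j+r-(2*n+3), by omega⟩ : Fin n)]
    · rw [if_pos (show i+j+r = 2*n+2+((⟨i+j+r-(2*n+3), by omega⟩ : Fin n).1+1) from by
        show i+j+r = 2*n+2+(i+j+r-(2*n+3)+1); omega)]
      show get n x.2 i * get n x.2 j * Tl n s x (i+j+r-(2*n+3)+1) = _
      unfold Tl
      rw [Finset.mul_sum]
      apply Finset.sum_congr rfl
      intro l hl
      rw [Finset.mem_Icc] at hl
      by_cases h4 : 4*n+4 ≤ i+j+l+(r+s)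
      · rw [if_pos (by omega), if_pos h4,
          show i+j+r-(2*n+3)+1+l+s-(2*n+2) = i+j+l+(r+s)-(4*n+4) from by omega]
        ring
      · rw [if_neg (by omega), if_neg h4, mul_zero]
    · intro b _ hb
      rw [if_neg (fun hc2 => hb (Fin.ext (show b.1 = i+j+r-(2*n+3) from by omega)))]
    · intro h; exact absurd (Finset.mem_univ _) h
  · rw [Finset.sum_eq_zero fun m _ => if_neg (by omega : ¬ i+j+r = 2*n+2+(m.1+1)),
      Finset.sum_eq_zero]
    intro l hl
    rw [Finset.mem_Icc] at hl
    rw [if_neg (by omega)]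

lemma sum_AqT (n r s : ℕ) (hn2 : 2 ≤ n) (hrn : r ≤ n) (hsn : s ≤ n) (x) (ar br : ℝ)
    (hbr : br = 0 ∨ s < n) :
    ∑ m : Fin n, ((1/2) * quadB n r x (m.1+1)
        - ar * (if 1 = m.1+1 then 1 else 0)
        - br * ((if 2 = m.1+1 then 1 else 0)
            - 2 * get n x.1 1 * (if 1 = m.1+1 then 1 else 0))) * Tl n s x (m.1+1)
    = (1/2) * W3 n (r+s) x := by
  have expand : ∀ m : Fin n, ((1/2) * quadB n r x (m.1+1)
        - ar * (if 1 = m.1+1 then 1 else 0)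
        - br * ((if 2 = m.1+1 then 1 else 0)
            - 2 * get n x.1 1 * (if 1 = m.1+1 then 1 else 0))) * Tl n s x (m.1+1)
      = ((1/2) * quadB n r x (m.1+1)) * Tl n s x (m.1+1)
        - ar * ((if 1 = m.1+1 then 1 else 0) * Tl n s x (m.1+1))
        - br * ((if 2 = m.1+1 then 1 else 0) * Tl n s x (m.1+1))
        + (2 * get n x.1 1 * br) * ((if 1 = m.1+1 then 1 else 0) * Tl n s x (m.1+1)) :=
    fun m => by ring
  rw [Finset.sum_congr rfl fun m _ => expand m]
  rw [Finset.sum_add_distrib, Finset.sum_sub_distrib, Finset.sum_sub_distrib,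
    ← Finset.mul_sum, ← Finset.mul_sum, ← Finset.mul_sum]
  rw [sum_quad n r s hrn hsn x,
    sum_delta n 1 le_rfl (by omega) (fun t => Tl n s x t),
    sum_delta n 2 (by omega) hn2 (fun t => Tl n s x t),
    Tl_one n s hsn x]
  have h2 : Tl n s x 2 = 0 ∨ br = 0 := by
    rcases hbr with h | h
    · exact Or.inr h
    · exact Or.inl (Tl_two n s h x)
  rcases h2 with h | h <;> rw [h] <;> ring

lemma Dq_eval (n u : ℕ) (hu2 : 2 ≤ u) (hun : u ≤ n)
    (x : (Fin n → ℝ) × (Fin n → ℝ)) (m : Fin n) :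
    fderiv ℝ (Fcub n u) x (Pi.single m 1, 0) =
      (1/2) * quadB n u x (m.1+1)
      - (if u+1 = n then 1 else 0) * (if 1 = m.1+1 then 1 else 0)
      - (if u = n then 1 else 0) * ((if 2 = m.1+1 then 1 else 0)
          - 2 * get n x.1 1 * (if 1 = m.1+1 then 1 else 0)) := by
  rw [fderiv_Fcub]
  have hz1 : get n ((Pi.single m (1:ℝ), (0 : Fin n → ℝ)) :
      (Fin n → ℝ) × (Fin n → ℝ)).1 1 = if 1 = m.1+1 then 1 else 0 := get_single n m 1
  have hz2 : get n ((Pi.single m (1:ℝ), (0 : Fin n → ℝ)) :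
      (Fin n → ℝ) × (Fin n → ℝ)).1 2 = if 2 = m.1+1 then 1 else 0 := get_single n m 2
  rw [hz1, hz2]
  have hpoint : ∀ i j : ℕ,
      (get n ((Pi.single m (1:ℝ), (0 : Fin n → ℝ)) :
          (Fin n → ℝ) × (Fin n → ℝ)).1 (i + j + u - 2 * n - 2) * get n x.2 i * get n x.2 j
        + qq n x.1 (i + j + u - 2 * n - 2) *
            (get n ((Pi.single m (1:ℝ), (0 : Fin n → ℝ)) :
                (Fin n → ℝ) × (Fin n → ℝ)).2 i * get n x.2 j
              + get n x.2 i * get n ((Pi.single m (1:ℝ), (0 : Fin n → ℝ)) :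
                (Fin n → ℝ) × (Fin n → ℝ)).2 j))
      = (if i+j+u = 2*n+2+(m.1+1) then get n x.2 i * get n x.2 j else 0) := by
    intro i j
    have e1 : get n ((Pi.single m (1:ℝ), (0 : Fin n → ℝ)) :
        (Fin n → ℝ) × (Fin n → ℝ)).1 (i + j + u - 2 * n - 2)
        = if i + j + u - 2 * n - 2 = m.1+1 then 1 else 0 := get_single n m _
    have e2 : get n ((Pi.single m (1:ℝ), (0 : Fin n → ℝ)) :
        (Fin n → ℝ) × (Fin n → ℝ)).2 i = 0 := get_zero n i
    have e3 : get n ((Pi.single m (1:ℝ), (0 : Fin n → ℝ)) :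
        (Fin n → ℝ) × (Fin n → ℝ)).2 j = 0 := get_zero n j
    rw [e1, e2, e3]
    by_cases h : i+j+u = 2*n+2+(m.1+1)
    · rw [if_pos (by omega), if_pos h]; ring
    · rw [if_neg (by omega), if_neg h]; ring
  rw [Finset.sum_congr rfl fun i _ => Finset.sum_congr rfl fun j _ => hpoint i j]
  rw [region n u hu2 hun
    (fun i j => if i+j+u = 2*n+2+(m.1+1) then get n x.2 i * get n x.2 j else 0)]
  have hcollapse : ∀ i j : ℕ,
      (if 2*n+2 ≤ i+j+u then
        (if i+j+u = 2*n+2+(m.1+1) then get n x.2 i * get n x.2 j else 0) else 0)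
      = (if i+j+u = 2*n+2+(m.1+1) then get n x.2 i * get n x.2 j else 0) := by
    intro i j
    by_cases h1 : 2*n+2 ≤ i+j+u
    · rw [if_pos h1]
    · rw [if_neg h1, if_neg (by omega)]
  rw [Finset.sum_congr rfl fun i _ => Finset.sum_congr rfl fun j _ => hcollapse i j]
  rfl

lemma Dp_eval (n u : ℕ) (hu2 : 2 ≤ u) (hun : u ≤ n)
    (x : (Fin n → ℝ) × (Fin n → ℝ)) (m : Fin n) :
    fderiv ℝ (Fcub n u) x (0, Pi.single m 1) = Tl n u x (m.1+1) := by
  rw [fderiv_Fcub]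
  have hz1 : get n (((0 : Fin n → ℝ), Pi.single m (1:ℝ)) :
      (Fin n → ℝ) × (Fin n → ℝ)).1 1 = 0 := get_zero n 1
  have hz2 : get n (((0 : Fin n → ℝ), Pi.single m (1:ℝ)) :
      (Fin n → ℝ) × (Fin n → ℝ)).1 2 = 0 := get_zero n 2
  rw [hz1, hz2]
  have hpoint : ∀ i j : ℕ,
      (get n (((0 : Fin n → ℝ), Pi.single m (1:ℝ)) :
          (Fin n → ℝ) × (Fin n → ℝ)).1 (i + j + u - 2 * n - 2) * get n x.2 i * get n x.2 j
        + qq n x.1 (i + j + u - 2 * n - 2) *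
            (get n (((0 : Fin n → ℝ), Pi.single m (1:ℝ)) :
                (Fin n → ℝ) × (Fin n → ℝ)).2 i * get n x.2 j
              + get n x.2 i * get n (((0 : Fin n → ℝ), Pi.single m (1:ℝ)) :
                (Fin n → ℝ) × (Fin n → ℝ)).2 j))
      = qq n x.1 (i+j+u-(2*n+2)) * ((if i = m.1+1 then 1 else 0) * get n x.2 j
          + get n x.2 i * (if j = m.1+1 then 1 else 0)) := by
    intro i j
    have e1 : get n (((0 : Fin n → ℝ), Pi.single m (1:ℝ)) :
        (Fin n → ℝ) × (Fin n → ℝ)).1 (i + j + u - 2 * n - 2) = 0 := get_zero n _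
    have e2 : get n (((0 : Fin n → ℝ), Pi.single m (1:ℝ)) :
        (Fin n → ℝ) × (Fin n → ℝ)).2 i = if i = m.1+1 then 1 else 0 := get_single n m i
    have e3 : get n (((0 : Fin n → ℝ), Pi.single m (1:ℝ)) :
        (Fin n → ℝ) × (Fin n → ℝ)).2 j = if j = m.1+1 then 1 else 0 := get_single n m j
    have e4 : i + j + u - 2 * n - 2 = i + j + u - (2*n+2) := by omega
    rw [e1, e2, e3, e4]
    ring
  rw [Finset.sum_congr rfl fun i _ => Finset.sum_congr rfl fun j _ => hpoint i j]
  rw [region n u hu2 hun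
    (fun i j => qq n x.1 (i+j+u-(2*n+2)) * ((if i = m.1+1 then 1 else 0) * get n x.2 j
      + get n x.2 i * (if j = m.1+1 then 1 else 0)))]
  rw [ApT n u x (m.1+1) (by omega) (by have := m.isLt; omega)]
  ring

lemma Dq_top (n u : ℕ) (hn : 4 ≤ n) (hu2 : 2 ≤ u) (hun : u ≤ n)
    (x : (Fin n → ℝ) × (Fin n → ℝ)) (m : Fin n) (hm : n = m.1+1) :
    fderiv ℝ (Fcub n u) x (Pi.single m 1, 0) = 0 := by
  rw [Dq_eval n u hu2 hun x m]
  have hquad : quadB n u x (m.1+1) = 0 := by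
    apply Finset.sum_eq_zero
    intro i hi
    apply Finset.sum_eq_zero
    intro j hj
    rw [Finset.mem_Icc] at hi
    rw [Finset.mem_Icc] at hj
    rw [if_neg (by omega)]
  rw [hquad, if_neg (show ¬ (1:ℕ) = m.1+1 from by omega),
    if_neg (show ¬ (2:ℕ) = m.1+1 from by omega)]
  ring
end BenAux

open BenAux

/-- for `n ≥ 4` the additional integrals `F_r`, `r = 2,…,n`, of the
`n`-dimensional cubic-potential Benenti Hamiltonian commute with `pₙ` and pairwise
Poisson-commute: `{pₙ, F_r} = 0` and `{F_r, F_s} = 0`. -/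
theorem cubic_Benenti_additional_integrals_commute
    (n : ℕ) (hn : 4 ≤ n)
    (r s : ℕ) (hr : r ∈ Finset.Icc 2 n) (hs : s ∈ Finset.Icc 2 n)
    (x : (Fin n → ℝ) × (Fin n → ℝ)) :
    pbr n (fun y => get n y.2 n) (Fcub n r) x = 0 ∧
    pbr n (Fcub n r) (Fcub n s) x = 0 := by
  rw [Finset.mem_Icc] at hr hs
  obtain ⟨hr2, hrn⟩ := hr
  obtain ⟨hs2, hsn⟩ := hs
  constructor
  · unfold pbr
    apply Finset.sum_eq_zero
    intro m _
    have e1 : fderiv ℝ (fun y : (Fin n → ℝ) × (Fin n → ℝ) => get n y.2 n) x = Pg n n :=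
      (hP n n x).fderiv
    rw [e1, Pg_apply, Pg_apply]
    have hz : get n (((Pi.single m (1:ℝ), (0 : Fin n → ℝ)) :
        (Fin n → ℝ) × (Fin n → ℝ))).2 n = 0 := get_zero n n
    have hsg : get n ((((0 : Fin n → ℝ), Pi.single m (1:ℝ)) :
        (Fin n → ℝ) × (Fin n → ℝ))).2 n = if n = m.1+1 then 1 else 0 := get_single n m n
    rw [hz, hsg, zero_mul]
    by_cases hm : n = m.1+1
    · rw [if_pos hm, mul_one, Dq_top n r hn hr2 hrn x m hm]
      ring
    · rw [if_neg hm, mul_zero]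
      ring
  · rcases eq_or_ne r s with rfl | hrs
    · unfold pbr
      apply Finset.sum_eq_zero
      intro m _
      ring
    · unfold pbr
      have key : ∀ m : Fin n,
          fderiv ℝ (Fcub n r) x (Pi.single m 1, 0) * fderiv ℝ (Fcub n s) x (0, Pi.single m 1)
          - fderiv ℝ (Fcub n s) x (Pi.single m 1, 0) * fderiv ℝ (Fcub n r) x (0, Pi.single m 1)
          = ((1/2) * quadB n r x (m.1+1)
              - (if r+1 = n then 1 else 0) * (if 1 = m.1+1 then 1 else 0)
              - (if r = n then 1 else 0) * ((if 2 = m.1+1 then 1 else 0)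
                  - 2 * get n x.1 1 * (if 1 = m.1+1 then 1 else 0))) * Tl n s x (m.1+1)
            - ((1/2) * quadB n s x (m.1+1)
              - (if s+1 = n then 1 else 0) * (if 1 = m.1+1 then 1 else 0)
              - (if s = n then 1 else 0) * ((if 2 = m.1+1 then 1 else 0)
                  - 2 * get n x.1 1 * (if 1 = m.1+1 then 1 else 0))) * Tl n r x (m.1+1) := by
        intro m
        rw [Dq_eval n r hr2 hrn x m, Dp_eval n s hs2 hsn x m,
          Dq_eval n s hs2 hsn x m, Dp_eval n r hr2 hrn x m]
      rw [Finset.sum_congr rfl fun m _ => key m, Finset.sum_sub_distrib]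
      have hbr1 : ((if r = n then (1:ℝ) else 0) = 0) ∨ s < n := by
        rcases eq_or_lt_of_le hsn with h | h
        · exact Or.inl (by rw [if_neg (by omega)])
        · exact Or.inr h
      have hbr2 : ((if s = n then (1:ℝ) else 0) = 0) ∨ r < n := by
        rcases eq_or_lt_of_le hrn with h | h
        · exact Or.inl (by rw [if_neg (by omega)])
        · exact Or.inr h
      rw [sum_AqT n r s (by omega) hrn hsn x _ _ hbr1,
        sum_AqT n s r (by omega) hsn hrn x _ _ hbr2,
        show s + r = r + s from Nat.add_comm s r, sub_self]
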